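/- arXiv:2604.07810 — 3 statements merged into one kernel-verified Lean document; each statement's English description precedes it below -/
import Mathlib

section
/- Let n ≥ 2 and let φ: [0,1] → ℝ^n be a function of bounded variation (finite total variation in the Euclidean norm). Then φ([0,1]) has n-dimensional Lebesgue measure zero. -/
/-!
Reparametrizing a curve of bounded variation by arc length makes it 1-Lipschitz, so its image is a
Lipschitz image of a subset of ℝ and has Hausdorff dimension at most 1. A set of Hausdorff
dimension less than `n` is null for `μH[n]`, hence for every Haar measure on an `n`-dimensional
space, in particular for Lebesgue measure.
-/

open MeasureTheory Set

open scoped NNReal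

theorem HasConstantSpeedOnWith.lipschitzOnWith {E : Type*} [PseudoEMetricSpace E]
    {f : ℝ → E} {s : Set ℝ} {l : ℝ≥0} (hf : HasConstantSpeedOnWith f s l) :
    LipschitzOnWith l f s := by
  have of_le : ∀ ⦃x⦄, x ∈ s → ∀ ⦃y⦄, y ∈ s → x ≤ y →
      edist (f x) (f y) ≤ l * edist x y := by
    intro x hx y hy hxy
    calc edist (f x) (f y) ≤ eVariationOn f (s ∩ Icc x y) :=
          eVariationOn.edist_le f ⟨hx, le_rfl, hxy⟩ ⟨hy, hxy, le_rfl⟩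
      _ = ENNReal.ofReal (l * (y - x)) := hf hx hy
      _ = l * edist x y := by
        rw [ENNReal.ofReal_mul l.coe_nonneg, ENNReal.ofReal_coe_nnreal, edist_comm,
          edist_dist, Real.dist_eq, abs_of_nonneg (sub_nonneg.2 hxy)]
  intro x hx y hy
  rcases le_total x y with hxy | hyx
  · exact of_le hx hy hxy
  · rw [edist_comm, edist_comm x]; exact of_le hy hx hyx

theorem LocallyBoundedVariationOn.dimH_image_le_one {E : Type*} [EMetricSpace E]
    {f : ℝ → E} {s : Set ℝ} (hf : LocallyBoundedVariationOn f s) : dimH (f '' s) ≤ 1 := by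
  rcases s.eq_empty_or_nonempty with rfl | ⟨a, ha⟩
  · simp
  set v := variationOnFromTo f s a
  have himage : f '' s = naturalParameterization f s a '' (v '' s) := by
    rw [image_image]
    exact image_congr fun b hb ↦
      (edist_eq_zero.1 (edist_naturalParameterization_eq_zero hf ha hb)).symm
  calc dimH (f '' s) ≤ dimH (v '' s) := by
        rw [himage]
        exact (has_unit_speed_naturalParameterization f hf ha).lipschitzOnWith.dimH_image_le
    _ ≤ dimH (univ : Set ℝ) := dimH_mono (subset_univ _)
    _ = 1 := Real.dimH_univ

theorem MeasureTheory.Measure.addHaar_eq_zero_of_dimH_lt_finrank {E : Type*}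
    [NormedAddCommGroup E] [NormedSpace ℝ E] [FiniteDimensional ℝ E] [MeasurableSpace E]
    [BorelSpace E] (μ : Measure E) [μ.IsAddHaarMeasure] {s : Set E}
    (hs : dimH s < Module.finrank ℝ E) : μ s = 0 := by
  have hH : μH[(Module.finrank ℝ E : ℝ≥0)] s = 0 :=
    hausdorffMeasure_of_dimH_lt (by simpa using hs)
  rw [NNReal.coe_natCast] at hH
  exact absolutelyContinuous_isAddHaarMeasure μ μH[Module.finrank ℝ E] hH

theorem image_of_boundedVariation_measure_zero
    (n : ℕ) (hn : 2 ≤ n) (φ : ℝ → EuclideanSpace ℝ (Fin n))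
    (hφ : BoundedVariationOn φ (Set.Icc (0 : ℝ) 1)) :
    volume (φ '' Set.Icc (0 : ℝ) 1) = 0 := by
  refine Measure.addHaar_eq_zero_of_dimH_lt_finrank volume ?_
  calc dimH (φ '' Icc 0 1) ≤ 1 := hφ.locallyBoundedVariationOn.dimH_image_le_one
    _ < Module.finrank ℝ (EuclideanSpace ℝ (Fin n)) := by
      rw [finrank_euclideanSpace_fin]; exact_mod_cast hn
end

section
/- Let T₁, T₂ be i.i.d. Uniform(0, W) and τ₁, τ₂ be i.i.d. Exponential with mean η, independent of the birth times. The probability that the intervals [T₁, T₁+τ₁] and [T₂, T₂+τ₂] overlap equals (2/u²)(u − 1 + e^{−u}) where u = W/η. -/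
open MeasureTheory ProbabilityTheory

/-- The uniform probability measure on the interval `[0, W]`. -/
noncomputable def uniformOnWindow (W : ℝ) : Measure ℝ :=
  (ENNReal.ofReal W)⁻¹ • volume.restrict (Set.Icc 0 W)

/-!
Given the birth times `t₁, t₂`, the intervals overlap iff each lifetime exceeds the wait until the
later birth, `τᵢ > max t₁ t₂ - tᵢ`. The two exponential tails multiply to `exp (-r s)` where
`s = |t₁ - t₂|` is the sum of these waits, so the conditional overlap probability depends only on
the gap. Averaging this over the uniform square `[0, W]²` gives `(2 / (rW)²) (rW - 1 + exp (-rW))`.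
-/

open Real Set

/-- Points are `((T₁, T₂), (τ₁, τ₂))`: birth times first, then lifetimes. -/
def overlapEvent : Set ((ℝ × ℝ) × (ℝ × ℝ)) :=
  {p | max p.1.1 p.1.2 < min (p.1.1 + p.2.1) (p.1.2 + p.2.2)}

lemma measurableSet_overlapEvent : MeasurableSet overlapEvent :=
  measurableSet_lt (by fun_prop) (by fun_prop)

lemma preimage_mk_overlapEvent (t : ℝ × ℝ) :
    Prod.mk t ⁻¹' overlapEvent = Ioi (max t.1 t.2 - t.1) ×ˢ Ioi (max t.1 t.2 - t.2) := by
  ext τ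
  simp only [overlapEvent, mem_preimage, mem_ofPred_eq, mem_prod, mem_Ioi, lt_min_iff,
    sub_lt_iff_lt_add']

lemma expMeasure_Ioi {r a : ℝ} (hr : 0 < r) (ha : 0 ≤ a) :
    expMeasure r (Ioi a) = ENNReal.ofReal (exp (-(r * a))) := by
  have := isProbabilityMeasure_expMeasure hr
  have h_exp_le_one : exp (-(r * a)) ≤ 1 := exp_le_one_iff.2 (by nlinarith)
  rw [← compl_Iic, prob_compl_eq_one_sub measurableSet_Iic, ← ofReal_cdf, cdf_expMeasure_eq hr,
    if_pos ha, ← ENNReal.ofReal_one, ← ENNReal.ofReal_sub _ (sub_nonneg.2 h_exp_le_one),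
    sub_sub_cancel]

lemma expMeasure_prod_preimage_mk_overlapEvent {r : ℝ} (hr : 0 < r) (t : ℝ × ℝ) :
    ((expMeasure r).prod (expMeasure r)) (Prod.mk t ⁻¹' overlapEvent) =
      ENNReal.ofReal (exp (-(r * |t.1 - t.2|))) := by
  have := isProbabilityMeasure_expMeasure hr
  have h_waits : (max t.1 t.2 - t.1) + (max t.1 t.2 - t.2) = |t.1 - t.2| := by
    linarith [max_sub_min_eq_abs' t.1 t.2, min_add_max t.1 t.2]
  rw [preimage_mk_overlapEvent, Measure.prod_prod,
    expMeasure_Ioi hr (sub_nonneg.2 (le_max_left _ _)),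
    expMeasure_Ioi hr (sub_nonneg.2 (le_max_right _ _)),
    ← ENNReal.ofReal_mul (exp_pos _).le, ← exp_add, ← h_waits]
  ring_nf

lemma measure_overlapEvent_eq_lintegral {r : ℝ} (hr : 0 < r) (μ : Measure (ℝ × ℝ)) [SFinite μ] :
    (μ.prod ((expMeasure r).prod (expMeasure r))) overlapEvent =
      ∫⁻ t, ENNReal.ofReal (exp (-(r * |t.1 - t.2|))) ∂μ := by
  have := isProbabilityMeasure_expMeasure hr
  rw [Measure.prod_apply measurableSet_overlapEvent]
  simp only [expMeasure_prod_preimage_mk_overlapEvent hr]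

instance (W : ℝ) : SFinite (uniformOnWindow W) := by
  unfold uniformOnWindow
  infer_instance

lemma ae_mem_uniformOnWindow (W : ℝ) : ∀ᵐ x ∂uniformOnWindow W, x ∈ Icc 0 W :=
  Measure.ae_smul_measure (ae_restrict_mem measurableSet_Icc) _

lemma lintegral_uniformOnWindow_ofReal {W : ℝ} (hW : 0 < W) {f : ℝ → ℝ}
    (hf : IntegrableOn f (Icc 0 W)) (hf_nonneg : ∀ x ∈ Icc 0 W, 0 ≤ f x) :
    ∫⁻ x, ENNReal.ofReal (f x) ∂uniformOnWindow W = ENNReal.ofReal (W⁻¹ * ∫ x in 0..W, f x) := by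
  rw [uniformOnWindow, lintegral_smul_measure,
    ← ofReal_integral_eq_lintegral_ofReal hf
      ((ae_restrict_iff' measurableSet_Icc).2 (.of_forall hf_nonneg)),
    integral_Icc_eq_integral_Ioc, ← intervalIntegral.integral_of_le hW.le,
    ← ENNReal.ofReal_inv_of_pos hW, smul_eq_mul, ← ENNReal.ofReal_mul (inv_nonneg.2 hW.le)]

lemma integral_exp_neg_mul {r : ℝ} (hr : r ≠ 0) (a : ℝ) :
    ∫ x in 0..a, exp (-(r * x)) = r⁻¹ * (1 - exp (-(r * a))) := by
  simp only [← neg_mul]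
  rw [intervalIntegral.integral_comp_mul_left exp (neg_ne_zero.2 hr), integral_exp,
    mul_zero, exp_zero, smul_eq_mul, inv_neg]
  ring

lemma integral_exp_neg_mul_abs {r a : ℝ} (hr : r ≠ 0) (ha : 0 ≤ a) :
    ∫ x in 0..a, exp (-(r * |x|)) = r⁻¹ * (1 - exp (-(r * a))) := by
  rw [← integral_exp_neg_mul hr]
  refine intervalIntegral.integral_congr fun x hx => ?_
  rw [uIcc_of_le ha] at hx
  simp only [abs_of_nonneg hx.1]

lemma integral_exp_neg_mul_abs_sub {r W t : ℝ} (hr : r ≠ 0) (ht : t ∈ Icc 0 W) :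
    ∫ s in 0..W, exp (-(r * |t - s|)) = r⁻¹ * (2 - exp (-(r * t)) - exp (-(r * (W - t)))) := by
  have h_int : ∀ a b, IntervalIntegrable (fun s => exp (-(r * |t - s|))) volume a b :=
    fun a b => (by fun_prop : Continuous fun s => exp (-(r * |t - s|))).intervalIntegrable a b
  have h_left := intervalIntegral.integral_comp_sub_left (fun x => exp (-(r * |x|))) t
    (a := 0) (b := t)
  have h_right := intervalIntegral.integral_comp_sub_right (fun x => exp (-(r * |x|))) t
    (a := t) (b := W)
  simp only [sub_self, sub_zero, abs_sub_comm _ t] at h_left h_right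
  rw [← intervalIntegral.integral_add_adjacent_intervals (h_int 0 t) (h_int t W), h_left,
    h_right, integral_exp_neg_mul_abs hr ht.1, integral_exp_neg_mul_abs hr (sub_nonneg.2 ht.2)]
  ring

lemma integral_two_sub_exp_neg_mul_sub_exp_neg_mul_sub {r : ℝ} (hr : r ≠ 0) (W : ℝ) :
    ∫ t in 0..W, (2 - exp (-(r * t)) - exp (-(r * (W - t)))) =
      2 * W - 2 * r⁻¹ * (1 - exp (-(r * W))) := by
  have h_cont : Continuous fun t => exp (-(r * t)) := by fun_prop
  have h_reflect := intervalIntegral.integral_comp_sub_left (fun x => exp (-(r * x))) W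
    (a := 0) (b := W)
  simp only [sub_self, sub_zero] at h_reflect
  rw [intervalIntegral.integral_sub (f := fun t => 2 - exp (-(r * t)))
      (g := fun t => exp (-(r * (W - t))))
      ((continuous_const.sub h_cont).intervalIntegrable _ _)
      ((h_cont.comp (continuous_sub_left W)).intervalIntegrable _ _),
    intervalIntegral.integral_sub intervalIntegrable_const (h_cont.intervalIntegrable _ _),
    intervalIntegral.integral_const, h_reflect, integral_exp_neg_mul hr, smul_eq_mul]
  ring

lemma lintegral_exp_neg_mul_abs_sub_uniformOnWindow {r W : ℝ} (hr : 0 < r) (hW : 0 < W) :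
    ∫⁻ t, ENNReal.ofReal (exp (-(r * |t.1 - t.2|)))
        ∂(uniformOnWindow W).prod (uniformOnWindow W) =
      ENNReal.ofReal (2 / (r * W) ^ 2 * (r * W - 1 + exp (-(r * W)))) := by
  have h_exp_le_one : ∀ x ≥ 0, exp (-(r * x)) ≤ 1 := fun x hx => exp_le_one_iff.2 (by nlinarith)
  have h_inner : ∀ᵐ t ∂uniformOnWindow W,
      ∫⁻ s, ENNReal.ofReal (exp (-(r * |t - s|))) ∂uniformOnWindow W =
        ENNReal.ofReal (W⁻¹ * (r⁻¹ * (2 - exp (-(r * t)) - exp (-(r * (W - t)))))) := by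
    filter_upwards [ae_mem_uniformOnWindow W] with t ht
    rw [lintegral_uniformOnWindow_ofReal hW (by fun_prop : Continuous _).integrableOn_Icc
      (fun _ _ => (exp_pos _).le), integral_exp_neg_mul_abs_sub hr.ne' ht]
  have h_inner_nonneg : ∀ t ∈ Icc 0 W,
      0 ≤ W⁻¹ * (r⁻¹ * (2 - exp (-(r * t)) - exp (-(r * (W - t))))) := fun t ht => by
    have := h_exp_le_one t ht.1
    have := h_exp_le_one (W - t) (sub_nonneg.2 ht.2)
    have : 0 ≤ 2 - exp (-(r * t)) - exp (-(r * (W - t))) := by linarith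
    positivity
  rw [lintegral_prod _ (by fun_prop), lintegral_congr_ae h_inner,
    lintegral_uniformOnWindow_ofReal hW (by fun_prop : Continuous _).integrableOn_Icc
      h_inner_nonneg,
    intervalIntegral.integral_const_mul, intervalIntegral.integral_const_mul,
    integral_two_sub_exp_neg_mul_sub_exp_neg_mul_sub hr.ne']
  congr 1
  field_simp
  ring

theorem measure_overlapEvent_uniformOnWindow_expMeasure {r W : ℝ} (hr : 0 < r) (hW : 0 < W) :
    (((uniformOnWindow W).prod (uniformOnWindow W)).prod
        ((expMeasure r).prod (expMeasure r))) overlapEvent =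
      ENNReal.ofReal (2 / (r * W) ^ 2 * (r * W - 1 + exp (-(r * W)))) := by
  rw [measure_overlapEvent_eq_lintegral hr, lintegral_exp_neg_mul_abs_sub_uniformOnWindow hr hW]

theorem overlap_probability_formula (W η : ℝ) (hW : 0 < W) (hη : 0 < η) :
    (((uniformOnWindow W).prod (uniformOnWindow W)).prod
        ((expMeasure (1 / η)).prod (expMeasure (1 / η))))
      {p : (ℝ × ℝ) × (ℝ × ℝ) |
        max p.1.1 p.1.2 < min (p.1.1 + p.2.1) (p.1.2 + p.2.2)} =
    ENNReal.ofReal (2 / (W / η) ^ 2 * (W / η - 1 + Real.exp (-(W / η)))) := by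
  have h := measure_overlapEvent_uniformOnWindow_expMeasure (one_div_pos.2 hη) hW
  rwa [one_div_mul_eq_div] at h
end

section
/- Suppose a kernel W: [0,1]² → ℝ factors as W(u,v) = ξ_G(u) · ξ_R(v) for measurable ξ_G, ξ_R: [0,1] → ℝ^d, where the pushforwards of Lebesgue measure under ξ_G and ξ_R are absolutely continuous on ℝ^d (in particular not supported on a proper linear subspace). If there is a full-measure set S_R ⊆ [0,1] such that for every v ∈ S_R the section u ↦ W(u,v) has bounded variation, then every component of ξ_G is a function of bounded variation on [0,1]. -/
/-!
Since the pushforward of `ξR` is absolutely continuous and has mass `1`, it cannot live on a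
proper subspace (those are Lebesgue-null), so `ξR(S_R)` spans `ℝ^d`. The functions `w` for which
`u ↦ ⟪ξG u, w⟫` has bounded variation form a subspace containing `ξR(S_R)`, hence every `w`;
taking `w = e_i` gives the components of `ξG`.
-/

open MeasureTheory
open scoped RealInnerProductSpace

section BoundedVariation

variable {α E : Type*} [LinearOrder α] [SeminormedAddCommGroup E]

theorem eVariationOn_add_le (f g : α → E) (s : Set α) :
    eVariationOn (f + g) s ≤ eVariationOn f s + eVariationOn g s := by
  refine iSup_le fun ⟨n, u, hu, hus⟩ => ?_
  calc ∑ i ∈ Finset.range n, edist ((f + g) (u (i + 1))) ((f + g) (u i))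
      ≤ ∑ i ∈ Finset.range n,
          (edist (f (u (i + 1))) (f (u i)) + edist (g (u (i + 1))) (g (u i))) :=
        Finset.sum_le_sum fun i _ => edist_add_add_le _ _ _ _
    _ = ∑ i ∈ Finset.range n, edist (f (u (i + 1))) (f (u i))
          + ∑ i ∈ Finset.range n, edist (g (u (i + 1))) (g (u i)) :=
        Finset.sum_add_distrib
    _ ≤ eVariationOn f s + eVariationOn g s :=
        add_le_add (eVariationOn.sum_le hu hus) (eVariationOn.sum_le hu hus)

theorem BoundedVariationOn.add {f g : α → E} {s : Set α} (hf : BoundedVariationOn f s)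
    (hg : BoundedVariationOn g s) : BoundedVariationOn (f + g) s :=
  ((eVariationOn_add_le f g s).trans_lt (ENNReal.add_lt_top.2 ⟨hf.lt_top, hg.lt_top⟩)).ne

variable (𝕜 : Type*) [NormedField 𝕜] [NormedSpace 𝕜 E]

def boundedVariationSubmodule (s : Set α) : Submodule 𝕜 (α → E) where
  carrier := {f | BoundedVariationOn f s}
  zero_mem' := by
    have hconst : ((0 : α → E) '' s).Subsingleton :=
      Set.subsingleton_singleton.anti (Set.image_subset_iff.2 fun _ _ => rfl)
    exact (eVariationOn.constant_on hconst).trans_ne ENNReal.zero_ne_top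
  add_mem' := BoundedVariationOn.add
  smul_mem' c _ hf := (lipschitzWith_smul c).comp_boundedVariationOn hf

variable {𝕜}

theorem BoundedVariationOn.of_span_eq_top {F : Type*} [AddCommGroup F] [Module 𝕜 F]
    (L : F →ₗ[𝕜] α → E) {S : Set F} (hS : Submodule.span 𝕜 S = ⊤) {s : Set α}
    (hL : ∀ w ∈ S, BoundedVariationOn (L w) s) (w : F) : BoundedVariationOn (L w) s := by
  have hle : Submodule.span 𝕜 S ≤ (boundedVariationSubmodule 𝕜 s).comap L :=
    Submodule.span_le.2 hL
  exact hle (hS ▸ Submodule.mem_top)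

end BoundedVariation

section Span

variable {E : Type*} [NormedAddCommGroup E] [NormedSpace ℝ E] [MeasurableSpace E] [BorelSpace E]
  [FiniteDimensional ℝ E]

theorem Submodule.eq_top_of_ae_mem {μ ν : Measure E} [ν.IsAddHaarMeasure] (hμν : μ ≪ ν)
    (hμ : μ ≠ 0) {V : Submodule ℝ E} (hV : ∀ᵐ x ∂μ, x ∈ V) : V = ⊤ := by
  by_contra hne
  have hV_null : μ V = 0 := hμν (Measure.addHaar_submodule ν V hne)
  have hVc_null : μ (V : Set E)ᶜ = 0 := hV
  exact hμ (Measure.measure_univ_eq_zero.1 (by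
    rw [← Set.union_compl_self (V : Set E)]
    exact measure_union_null hV_null hVc_null))

theorem Submodule.span_image_eq_top_of_map_absolutelyContinuous {X : Type*} [MeasurableSpace X]
    {ν : Measure X} {μ : Measure E} [μ.IsAddHaarMeasure] {f : X → E} (hf : Measurable f)
    (hfν : ν.map f ≪ μ) (hν : ν ≠ 0) {S : Set X} (hS : ∀ᵐ x ∂ν, x ∈ S) :
    Submodule.span ℝ (f '' S) = ⊤ := by
  refine Submodule.eq_top_of_ae_mem hfν ((Measure.map_ne_zero_iff hf.aemeasurable).2 hν) ?_
  have hV : MeasurableSet {y | y ∈ Submodule.span ℝ (f '' S)} :=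
    (Submodule.span ℝ (f '' S)).closed_of_finiteDimensional.measurableSet
  refine (ae_map_iff hf.aemeasurable hV).2 ?_
  exact hS.mono fun x hx => Submodule.subset_span (Set.mem_image_of_mem f hx)

end Span

theorem bilinear_kernel_sections_BV_implies_components_BV_general
    (d : ℕ) (ξG ξR : ℝ → EuclideanSpace ℝ (Fin d))
    (hmR : Measurable ξR)
    (hacR : Measure.map ξR (volume.restrict (Set.Icc (0 : ℝ) 1)) ≪
      (volume : Measure (EuclideanSpace ℝ (Fin d))))
    (SR : Set ℝ)
    (hfull : volume (Set.Icc (0 : ℝ) 1 \ SR) = 0)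
    (hBV : ∀ v ∈ SR, BoundedVariationOn (fun u => ⟪ξG u, ξR v⟫) (Set.Icc (0 : ℝ) 1)) :
    ∀ i : Fin d, BoundedVariationOn (fun u => ξG u i) (Set.Icc (0 : ℝ) 1) := by
  have hvol : volume.restrict (Set.Icc (0 : ℝ) 1) ≠ 0 := by simp [Measure.restrict_eq_zero]
  have hae_SR : ∀ᵐ v ∂volume.restrict (Set.Icc (0 : ℝ) 1), v ∈ SR := by
    rw [ae_iff, Measure.restrict_apply' measurableSet_Icc, Set.inter_comm]
    exact hfull
  have hspan : Submodule.span ℝ (ξR '' SR) = ⊤ :=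
    Submodule.span_image_eq_top_of_map_absolutelyContinuous hmR hacR hvol hae_SR
  let L : EuclideanSpace ℝ (Fin d) →ₗ[ℝ] ℝ → ℝ := LinearMap.pi fun u => innerₛₗ ℝ (ξG u)
  intro i
  have hsections : ∀ w ∈ ξR '' SR, BoundedVariationOn (L w) (Set.Icc (0 : ℝ) 1) := by
    rintro _ ⟨v, hv, rfl⟩
    exact hBV v hv
  have hcoord : L (EuclideanSpace.single i 1) = fun u => ξG u i := by
    ext u
    simp [L, EuclideanSpace.inner_single_right]
  exact hcoord ▸ BoundedVariationOn.of_span_eq_top L hspan hsections (EuclideanSpace.single i 1)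

/-- If a bilinear kernel `W(u,v) = ξG(u) · ξR(v)` has, for every `v` in a full-measure
set of labels, a bounded-variation section `u ↦ W(u,v)`, and the label pushforwards of
`ξG` and `ξR` are absolutely continuous on `ℝ^d`, then each component of `ξG` has
bounded variation. -/
theorem bilinear_kernel_sections_BV_implies_components_BV
    (d : ℕ) (ξG ξR : ℝ → EuclideanSpace ℝ (Fin d))
    (hmG : Measurable ξG) (hmR : Measurable ξR)
    (hacG : Measure.map ξG (volume.restrict (Set.Icc (0 : ℝ) 1)) ≪
      (volume : Measure (EuclideanSpace ℝ (Fin d))))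
    (hacR : Measure.map ξR (volume.restrict (Set.Icc (0 : ℝ) 1)) ≪
      (volume : Measure (EuclideanSpace ℝ (Fin d))))
    (SR : Set ℝ) (hSR : SR ⊆ Set.Icc (0 : ℝ) 1)
    (hfull : volume (Set.Icc (0 : ℝ) 1 \ SR) = 0)
    (hBV : ∀ v ∈ SR, BoundedVariationOn (fun u => ⟪ξG u, ξR v⟫) (Set.Icc (0 : ℝ) 1)) :
    ∀ i : Fin d, BoundedVariationOn (fun u => ξG u i) (Set.Icc (0 : ℝ) 1) :=
  bilinear_kernel_sections_BV_implies_components_BV_general d ξG ξR hmR hacR SR hfull hBV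
end
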